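/- In the double D~ of the Jordan plane, for all n ≥ 1: u y^n = y^n u + n y^{n−1} − ∑_{k=0}^{n−1} binom(n,k+1) ((k+1)!/2^k) y^{n−1−k} x^k g, and u^n y = y u^n + n(1 − g) u^{n−1}. -/

import Mathlib

/-!
Since `u` commutes with `g`, the commutator `[u, y] = 1 - g` commutes with `u`, and the second
identity is the usual formula for `[u ^ n, y]`. For the first, `u y ^ (n + 1) = (u y ^ n) y`, and
moving `y` to the right past `y ^ m x ^ k g` costs, by `g y = y g + x g` and
`x ^ k y = y x ^ k + (k / 2) x ^ (k + 1)`, an extra term `((k + 2) / 2) y ^ m x ^ (k + 1) g`.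
The coefficients `C(n, k + 1) (k + 1)! / 2 ^ k` are the solution of the resulting Pascal-type
recursion `c (n + 1) (k + 1) = c n (k + 1) + c n k (k + 2) / 2`.
-/

open Finset

theorem pow_mul_eq_mul_pow_add_nsmul {R : Type*} [Semiring R] {a b c : R}
    (hab : a * b = b * a + c) (hac : a * c = c * a) (n : ℕ) :
    a ^ n * b = b * a ^ n + n • (c * a ^ (n - 1)) := by
  induction n with
  | zero => simp
  | succ n ih =>
    have hca : n • (a * (c * a ^ (n - 1))) = n • (c * a ^ n) := by
      rcases n with _ | n
      · simp
      · rw [← mul_assoc, hac, mul_assoc, ← pow_succ', Nat.add_sub_cancel]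
    calc a ^ (n + 1) * b = a * (a ^ n * b) := by rw [pow_succ', mul_assoc]
      _ = (b * a + c) * a ^ n + n • (a * (c * a ^ (n - 1))) := by
        rw [ih, mul_add, mul_smul_comm, ← mul_assoc, hab]
      _ = b * a ^ (n + 1) + (n + 1) • (c * a ^ (n + 1 - 1)) := by
        rw [hca, add_mul, mul_assoc, ← pow_succ', Nat.add_sub_cancel, succ_nsmul]
        abel

section JordanPlane

variable {K A : Type*} [Field K] [Ring A] [Algebra K A] {g x y : A}

theorem pow_mul_eq_of_mul_eq_sub_half_sq
    (hyx : y * x = x * y - (1 / 2 : K) • x ^ 2) (k : ℕ) :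
    x ^ k * y = y * x ^ k + ((k : K) / 2) • x ^ (k + 1) := by
  have hxy : x * y = y * x + (1 / 2 : K) • x ^ 2 := by rw [hyx, sub_add_cancel]
  induction k with
  | zero => simp
  | succ k ih =>
    calc x ^ (k + 1) * y = x * (x ^ k * y) := by rw [pow_succ', mul_assoc]
      _ = (y * x + (1 / 2 : K) • x ^ 2) * x ^ k + ((k : K) / 2) • x ^ (k + 2) := by
        rw [ih, mul_add, ← mul_assoc, hxy, mul_smul_comm, ← pow_succ']
      _ = y * x ^ (k + 1) + ((k + 1 : ℕ) / 2 : K) • x ^ (k + 2) := by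
        rw [add_mul, mul_assoc, ← pow_succ', smul_mul_assoc, ← pow_add, add_comm 2 k]
        push_cast
        match_scalars <;> ring

theorem pow_mul_pow_mul_mul_mul_eq (h2 : (2 : K) ≠ 0) (hgy : g * y = y * g + x * g)
    (hyx : y * x = x * y - (1 / 2 : K) • x ^ 2) (m k : ℕ) :
    y ^ m * x ^ k * g * y
      = y ^ (m + 1) * x ^ k * g + (((k : K) + 2) / 2) • (y ^ m * x ^ (k + 1) * g) := by
  calc y ^ m * x ^ k * g * y = y ^ m * (x ^ k * y * g) + y ^ m * (x ^ (k + 1) * g) := by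
        simp only [mul_assoc, hgy, mul_add]
        rw [← mul_assoc (x ^ k) x, ← pow_succ]
    _ = _ := by
        rw [pow_mul_eq_of_mul_eq_sub_half_sq hyx, add_mul, smul_mul_assoc, mul_add,
          mul_smul_comm]
        simp only [← mul_assoc, ← pow_succ]
        match_scalars <;> field_simp

variable (K) in
def jordanCoeff (n k : ℕ) : K := (n.choose (k + 1) : K) * (k + 1).factorial / 2 ^ k

theorem jordanCoeff_zero_right (n : ℕ) : jordanCoeff K n 0 = n := by
  simp [jordanCoeff]

theorem jordanCoeff_self (n : ℕ) : jordanCoeff K n n = 0 := by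
  simp [jordanCoeff, Nat.choose_succ_self]

theorem jordanCoeff_succ_succ (h2 : (2 : K) ≠ 0) (n k : ℕ) :
    jordanCoeff K (n + 1) (k + 1)
      = jordanCoeff K n (k + 1) + jordanCoeff K n k * (((k : K) + 2) / 2) := by
  simp only [jordanCoeff, Nat.choose_succ_succ' n (k + 1), Nat.factorial_succ (k + 1)]
  push_cast
  field_simp
  ring

theorem sum_jordanCoeff_smul_succ (h2 : (2 : K) ≠ 0) (hgy : g * y = y * g + x * g)
    (hyx : y * x = x * y - (1 / 2 : K) • x ^ 2) (n : ℕ) :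
    ∑ k ∈ range (n + 1), jordanCoeff K (n + 1) k • (y ^ (n - k) * x ^ k * g)
      = (∑ k ∈ range n, jordanCoeff K n k • (y ^ (n - 1 - k) * x ^ k * g)) * y + y ^ n * g := by
  set t : ℕ → ℕ → A := fun m k ↦ y ^ m * x ^ k * g
  have hshift : ∑ k ∈ range n, jordanCoeff K n k • t (n - k) k
      = (n : K) • t n 0 + ∑ k ∈ range n, jordanCoeff K n (k + 1) • t (n - 1 - k) (k + 1) := by
    have h := sum_range_succ' (fun k ↦ jordanCoeff K n k • t (n - k) k) n
    rw [sum_range_succ, jordanCoeff_self, zero_smul, add_zero] at h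
    rw [h, jordanCoeff_zero_right, add_comm]
    congr 2 with k
    rw [Nat.sub_add_eq, Nat.sub_right_comm]
  have hmul : (∑ k ∈ range n, jordanCoeff K n k • t (n - 1 - k) k) * y
      = ∑ k ∈ range n, jordanCoeff K n k • t (n - k) k
        + ∑ k ∈ range n, (jordanCoeff K n k * (((k : K) + 2) / 2)) • t (n - 1 - k) (k + 1) := by
    rw [sum_mul, ← sum_add_distrib]
    refine sum_congr rfl fun k hk ↦ ?_
    have hkn : n - 1 - k + 1 = n - k := by have := mem_range.mp hk; omega
    simp only [t]
    rw [smul_mul_assoc, pow_mul_pow_mul_mul_mul_eq h2 hgy hyx, hkn, smul_add, smul_smul]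
  calc ∑ k ∈ range (n + 1), jordanCoeff K (n + 1) k • t (n - k) k
      = (n + 1 : K) • t n 0
        + ∑ k ∈ range n, jordanCoeff K (n + 1) (k + 1) • t (n - 1 - k) (k + 1) := by
        rw [sum_range_succ', jordanCoeff_zero_right, add_comm]
        push_cast
        congr 2 with k
        rw [Nat.sub_add_eq, Nat.sub_right_comm]
    _ = (∑ k ∈ range n, jordanCoeff K n k • t (n - 1 - k) k) * y + t n 0 := by
        simp only [jordanCoeff_succ_succ h2, add_smul, one_smul, sum_add_distrib]
        rw [hmul, hshift]
        abel
    _ = _ := by simp only [t, pow_zero, mul_one]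

theorem mul_pow_eq_sub_sum_jordanCoeff (h2 : (2 : K) ≠ 0) {u : A}
    (hgy : g * y = y * g + x * g) (hyx : y * x = x * y - (1 / 2 : K) • x ^ 2)
    (huy : u * y = y * u + (1 - g)) (n : ℕ) :
    u * y ^ n = y ^ n * u + (n : K) • y ^ (n - 1)
      - ∑ k ∈ range n, jordanCoeff K n k • (y ^ (n - 1 - k) * x ^ k * g) := by
  induction n with
  | zero => simp
  | succ n ih =>
    have hpred : (n : K) • y ^ (n - 1) * y = (n : K) • y ^ n := by
      rcases n with _ | n
      · simp
      · rw [smul_mul_assoc, ← pow_succ, Nat.add_sub_cancel]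
    calc u * y ^ (n + 1) = (u * y ^ n) * y := by rw [pow_succ, mul_assoc]
      _ = y ^ n * (y * u + (1 - g)) + (n : K) • y ^ n
          - (∑ k ∈ range n, jordanCoeff K n k • (y ^ (n - 1 - k) * x ^ k * g)) * y := by
        rw [ih, sub_mul, add_mul, hpred, mul_assoc, huy]
      _ = _ := by
        rw [Nat.add_sub_cancel, sum_jordanCoeff_smul_succ h2 hgy hyx, mul_add, ← mul_assoc,
          ← pow_succ]
        push_cast
        simp only [add_smul, one_smul, mul_sub, mul_one]
        abel

end JordanPlane

theorem stmt12 (K : Type*) [Field K] (h2 : (2 : K) ≠ 0)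
    (A : Type*) [Ring A] [Algebra K A] (u g x y : A)
    (hgy : g * y = y * g + x * g)
    (hyx : y * x = x * y - (1/2 : K) • x ^ 2)
    (hug : u * g = g * u)
    (huy : u * y = y * u + (1 - g))
    (n : ℕ) :
    u * y ^ n = y ^ n * u + (n : K) • y ^ (n - 1)
      - ∑ k ∈ Finset.range n,
          ((n.choose (k + 1) : K) * (Nat.factorial (k + 1) : K) / 2 ^ k) •
            (y ^ (n - 1 - k) * x ^ k * g) ∧
    u ^ n * y = y * u ^ n + (n : K) • ((1 - g) * u ^ (n - 1)) := by
  refine ⟨mul_pow_eq_sub_sum_jordanCoeff h2 hgy hyx huy n, ?_⟩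
  have hu : u * (1 - g) = (1 - g) * u := by rw [mul_sub, sub_mul, mul_one, one_mul, hug]
  rw [Nat.cast_smul_eq_nsmul]
  exact pow_mul_eq_mul_pow_add_nsmul huy hu n
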